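/- arXiv:1606.00714 — 3 statements merged into one kernel-verified Lean document; each statement's English description precedes it below -/
import Mathlib

section
/- Under hypothesis (H1), φ_{A,k}(y) = -∞ if and only if y + ℝk ⊆ A. -/
open Set Pointwise

noncomputable def phiF {Y : Type*} [AddCommGroup Y] [Module ℝ Y] (A : Set Y) (k : Y) (y : Y) : EReal :=
  sInf ((fun t : ℝ => (t : EReal)) '' {t : ℝ | y - t • k ∈ A})

def recCone {Y : Type*} [AddCommGroup Y] [Module ℝ Y] (A : Set Y) : Set Y :=
  {u | ∀ a ∈ A, ∀ t : ℝ, 0 ≤ t → a + t • u ∈ A}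

def algInterior {Y : Type*} [AddCommGroup Y] [Module ℝ Y] (C : Set Y) : Set Y :=
  {x ∈ C | ∀ y : Y, ∃ ε : ℝ, 0 < ε ∧ ∀ t : ℝ, 0 ≤ t → t ≤ ε → x + t • y ∈ C}

/-! Since `-k` is a recession direction of `A`, the set of `t` with `y - t • k ∈ A` is an upper set
of `ℝ`; its infimum is `-∞` exactly when it is unbounded below, i.e. when it is all of `ℝ`. -/

theorem EReal.sInf_coe_image_eq_bot_iff {S : Set ℝ} :
    sInf (((↑) : ℝ → EReal) '' S) = ⊥ ↔ ¬BddBelow S := by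
  rw [sInf_eq_bot, not_bddBelow_iff]
  constructor
  · intro h r
    obtain ⟨_, ⟨s, hs, rfl⟩, hsr⟩ := h r (EReal.bot_lt_coe r)
    exact ⟨s, hs, EReal.coe_lt_coe_iff.mp hsr⟩
  · intro h b hb
    obtain ⟨r, -, hrb⟩ := EReal.lt_iff_exists_real_btwn.mp hb
    obtain ⟨s, hs, hsr⟩ := h r
    exact ⟨s, ⟨s, hs, rfl⟩, (EReal.coe_lt_coe_iff.mpr hsr).trans hrb⟩

theorem IsUpperSet.not_bddBelow_iff_eq_univ {α : Type*} [LinearOrder α] [NoMinOrder α]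
    {S : Set α} (hS : IsUpperSet S) : ¬BddBelow S ↔ S = univ := by
  refine ⟨fun h => eq_univ_of_forall fun x => ?_, fun h => h ▸ not_bddBelow_univ⟩
  obtain ⟨s, hs, hsx⟩ := not_bddBelow_iff.mp h x
  exact hS hsx.le hs

theorem isUpperSet_setOf_sub_smul_mem {R Y : Type*} [Ring R] [PartialOrder R]
    [IsOrderedAddMonoid R] [AddCommGroup Y] [Module R Y] {A : Set Y} {k : Y}
    (hrec : ∀ a ∈ A, ∀ t : R, 0 ≤ t → a - t • k ∈ A) (y : Y) :
    IsUpperSet {t : R | y - t • k ∈ A} := by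
  intro s t hst hs
  have h := hrec _ hs (t - s) (sub_nonneg.mpr hst)
  rwa [sub_smul, sub_sub, add_sub_cancel] at h

theorem stmt_4_general {Y : Type*} [AddCommGroup Y] [Module ℝ Y]
    (A : Set Y)
    (k : Y) (hrec : ∀ a ∈ A, ∀ t : ℝ, 0 ≤ t → a - t • k ∈ A) :
    ∀ y : Y, phiF A k y = ⊥ ↔ ∀ t : ℝ, y + t • k ∈ A := by
  intro y
  rw [phiF, EReal.sInf_coe_image_eq_bot_iff,
    (isUpperSet_setOf_sub_smul_mem hrec y).not_bddBelow_iff_eq_univ, eq_univ_iff_forall]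
  constructor <;> intro h t <;> simpa [sub_eq_add_neg] using h (-t)

theorem stmt_4 {Y : Type*} [AddCommGroup Y] [Module ℝ Y] [TopologicalSpace Y]
    [IsTopologicalAddGroup Y] [ContinuousSMul ℝ Y]
    (A : Set Y) (hAc : IsClosed A) (hAne : A.Nonempty) (hAp : A ≠ Set.univ)
    (k : Y) (hk : k ≠ 0) (hrec : ∀ a ∈ A, ∀ t : ℝ, 0 ≤ t → a - t • k ∈ A) :
    ∀ y : Y, phiF A k y = ⊥ ↔ ∀ t : ℝ, y + t • k ∈ A :=
  stmt_4_general A k hrec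
end

section
/- Under hypothesis (H1), φ_{A,k} is convex if and only if A is convex; moreover φ_{A,k} is quasiconvex if and only if A is convex. -/
open Set Pointwise

/-! Since `A - ℝ≥0 • k ⊆ A`, the set `{t | y - t • k ∈ A}` is an up-ray, closed when `A` is, so
`phiF A k y ≤ t ↔ y - t • k ∈ A`. Hence the epigraph of `phiF A k` is the preimage of `A` under the
linear map `(y, t) ↦ y - t • k`, while `A` is its slice at height `0`; and the sublevel sets of
`phiF A k` are the translates `A + t • k`, which are convex exactly when `A` is. -/

section

variable {Y : Type*} [AddCommGroup Y] [Module ℝ Y] {A : Set Y} {k : Y}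

lemma sub_smul_mem_of_le (hrec : ∀ a ∈ A, ∀ t : ℝ, 0 ≤ t → a - t • k ∈ A) {y : Y} {s t : ℝ}
    (hs : y - s • k ∈ A) (hst : s ≤ t) : y - t • k ∈ A := by
  convert hrec _ hs (t - s) (sub_nonneg.2 hst) using 1
  module

lemma sub_smul_mem_of_phiF_lt (hrec : ∀ a ∈ A, ∀ t : ℝ, 0 ≤ t → a - t • k ∈ A) {y : Y} {t : ℝ}
    (h : phiF A k y < t) : y - t • k ∈ A := by
  obtain ⟨_, ⟨s, hs, rfl⟩, hst⟩ := sInf_lt_iff.mp h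
  exact sub_smul_mem_of_le hrec hs (EReal.coe_lt_coe_iff.mp hst).le

lemma phiF_le_coe_iff [TopologicalSpace Y] [IsTopologicalAddGroup Y] [ContinuousSMul ℝ Y]
    (hAc : IsClosed A) (hrec : ∀ a ∈ A, ∀ t : ℝ, 0 ≤ t → a - t • k ∈ A) {y : Y} {t : ℝ} :
    phiF A k y ≤ t ↔ y - t • k ∈ A := by
  refine ⟨fun h => ?_, fun h => sInf_le ⟨t, h, rfl⟩⟩
  have hclosed : IsClosed {s : ℝ | y - s • k ∈ A} := hAc.preimage (by fun_prop)
  have hIoi : Ioi t ⊆ {s : ℝ | y - s • k ∈ A} := fun s hs =>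
    sub_smul_mem_of_phiF_lt hrec (h.trans_lt (EReal.coe_lt_coe hs))
  exact hclosed.closure_subset_iff.2 hIoi (by rw [closure_Ioi]; exact self_mem_Ici)

lemma phiF_smul_add_smul_le_max (hrec : ∀ a ∈ A, ∀ t : ℝ, 0 ≤ t → a - t • k ∈ A)
    (hA : Convex ℝ A) (y₁ y₂ : Y) {a b : ℝ} (ha : 0 ≤ a) (hb : 0 ≤ b) (hab : a + b = 1) :
    phiF A k (a • y₁ + b • y₂) ≤ max (phiF A k y₁) (phiF A k y₂) := by
  refine EReal.le_of_forall_lt_iff_le.1 fun t ht => sInf_le ⟨t, ?_, rfl⟩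
  have h₁ := sub_smul_mem_of_phiF_lt hrec ((le_max_left _ _).trans_lt ht)
  have h₂ := sub_smul_mem_of_phiF_lt hrec ((le_max_right _ _).trans_lt ht)
  obtain rfl : b = 1 - a := by linarith
  show _ - t • k ∈ A
  convert hA h₁ h₂ ha hb hab using 1
  module

lemma convex_of_phiF_le_max [TopologicalSpace Y] [IsTopologicalAddGroup Y] [ContinuousSMul ℝ Y]
    (hAc : IsClosed A) (hrec : ∀ a ∈ A, ∀ t : ℝ, 0 ≤ t → a - t • k ∈ A)
    (h : ∀ y₁ ∈ A, ∀ y₂ ∈ A, ∀ l : ℝ, 0 < l → l < 1 →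
      phiF A k (l • y₁ + (1 - l) • y₂) ≤ max (phiF A k y₁) (phiF A k y₂)) :
    Convex ℝ A := by
  have hA : ∀ {y}, y ∈ A ↔ phiF A k y ≤ ((0 : ℝ) : EReal) := by
    intro y; rw [phiF_le_coe_iff hAc hrec, zero_smul, sub_zero]
  refine convex_iff_forall_pos.2 fun y₁ h₁ y₂ h₂ a b ha hb hab => ?_
  obtain rfl : b = 1 - a := by linarith
  exact hA.2 ((h y₁ h₁ y₂ h₂ a ha (by linarith)).trans (max_le (hA.1 h₁) (hA.1 h₂)))

lemma convex_setOf_sub_smul_mem_iff :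
    Convex ℝ {p : Y × ℝ | p.1 - p.2 • k ∈ A} ↔ Convex ℝ A := by
  refine ⟨fun h => by simpa using h.linear_preimage (LinearMap.inl ℝ Y ℝ), fun hA => ?_⟩
  exact hA.linear_preimage (LinearMap.fst ℝ Y ℝ - (LinearMap.snd ℝ Y ℝ).smulRight k)

lemma convex_setOf_exists_sub_smul_mem (hA : Convex ℝ A) :
    Convex ℝ {y | ∃ t : ℝ, y - t • k ∈ A} := by
  simpa [Set.image] using
    (convex_setOf_sub_smul_mem_iff.2 hA).linear_image (LinearMap.fst ℝ Y ℝ)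

end

theorem stmt_8_general {Y : Type*} [AddCommGroup Y] [Module ℝ Y] [TopologicalSpace Y]
    [IsTopologicalAddGroup Y] [ContinuousSMul ℝ Y]
    (A : Set Y) (hAc : IsClosed A)
    (k : Y) (hrec : ∀ a ∈ A, ∀ t : ℝ, 0 ≤ t → a - t • k ∈ A) :
    (Convex ℝ {p : Y × ℝ | phiF A k p.1 ≤ (p.2 : EReal)} ↔ Convex ℝ A) ∧
      ((Convex ℝ {y | ∃ t : ℝ, y - t • k ∈ A} ∧
          ∀ y₁ ∈ {y | ∃ t : ℝ, y - t • k ∈ A}, ∀ y₂ ∈ {y | ∃ t : ℝ, y - t • k ∈ A},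
            ∀ l : ℝ, 0 < l → l < 1 →
              phiF A k (l • y₁ + (1 - l) • y₂) ≤ max (phiF A k y₁) (phiF A k y₂)) ↔
        Convex ℝ A) := by
  have hepi : {p : Y × ℝ | phiF A k p.1 ≤ (p.2 : EReal)} = {p | p.1 - p.2 • k ∈ A} :=
    Set.ext fun _ => phiF_le_coe_iff hAc hrec
  have hA_dom : ∀ y ∈ A, y ∈ {y | ∃ t : ℝ, y - t • k ∈ A} := fun y hy =>
    ⟨0, by simpa using hy⟩
  refine ⟨hepi ▸ convex_setOf_sub_smul_mem_iff, fun ⟨_, hq⟩ => ?_, fun hA => ⟨?_, ?_⟩⟩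
  · exact convex_of_phiF_le_max hAc hrec fun y₁ h₁ y₂ h₂ =>
      hq y₁ (hA_dom y₁ h₁) y₂ (hA_dom y₂ h₂)
  · exact convex_setOf_exists_sub_smul_mem hA
  · exact fun y₁ _ y₂ _ l hl _ =>
      phiF_smul_add_smul_le_max hrec hA y₁ y₂ hl.le (by linarith) (by ring)

theorem stmt_8 {Y : Type*} [AddCommGroup Y] [Module ℝ Y] [TopologicalSpace Y]
    [IsTopologicalAddGroup Y] [ContinuousSMul ℝ Y]
    (A : Set Y) (hAc : IsClosed A) (hAne : A.Nonempty) (hAp : A ≠ Set.univ)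
    (k : Y) (hk : k ≠ 0) (hrec : ∀ a ∈ A, ∀ t : ℝ, 0 ≤ t → a - t • k ∈ A) :
    (Convex ℝ {p : Y × ℝ | phiF A k p.1 ≤ (p.2 : EReal)} ↔ Convex ℝ A) ∧
      ((Convex ℝ {y | ∃ t : ℝ, y - t • k ∈ A} ∧
          ∀ y₁ ∈ {y | ∃ t : ℝ, y - t • k ∈ A}, ∀ y₂ ∈ {y | ∃ t : ℝ, y - t • k ∈ A},
            ∀ l : ℝ, 0 < l → l < 1 →
              phiF A k (l • y₁ + (1 - l) • y₂) ≤ max (phiF A k y₁) (phiF A k y₂)) ↔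
        Convex ℝ A) :=
  stmt_8_general A hAc k hrec
end

section
/- Let Y be a Banach space, A a proper closed subset with k ∈ -0⁺A \ {0}. Then φ_{A,k} is finite-valued and Lipschitz if and only if k ∈ -int 0⁺A, and in that case every Lipschitz constant of the sublinear function φ_{0⁺A,k} is a Lipschitz constant of φ_{A,k}. -/
open Set Pointwise

/-!
If `-k ∈ int 0⁺A`, some ball `ball(-k, r)` lies in the convex cone `C = 0⁺A`, hence
`u - t k ∈ C` as soon as `t > ‖u‖ / r`, i.e. `φ_{C,k}(u) ≤ ‖u‖ / r`. Since `A + C ⊆ A`, any `B`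
with `B + C ⊆ B` (here `A` or `C`) satisfies `φ_{B,k}(y₁) ≤ φ_{B,k}(y₂) + φ_{C,k}(y₁ - y₂)`,
which gives the Lipschitz bounds, and `φ_{B,k}(y) = -∞` would force `B = Y`.

Conversely, if `φ_{B,k}` is `L`-Lipschitz and `B - ℝ₊k ⊆ B`, then for `a ∈ B`, `t > 0` and
`‖w + k‖ < 1 / (L + 1)` we get `φ_{B,k}(a + t w) ≤ φ_{B,k}(a - t k) + L t ‖w + k‖ < 0`, so
`a + t w ∈ B`: the ball `ball(-k, 1 / (L + 1))` lies in `0⁺B`.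
-/

open Metric

section VectorSpace

variable {Y : Type*} [AddCommGroup Y] [Module ℝ Y] {A B C : Set Y} {k y : Y}

theorem phiF_le_of_sub_smul_mem {t : ℝ} (h : y - t • k ∈ A) : phiF A k y ≤ t :=
  sInf_le ⟨t, h, rfl⟩

theorem phiF_lt_coe_iff {c : ℝ} : phiF A k y < c ↔ ∃ t < c, y - t • k ∈ A := by
  simp only [phiF, sInf_lt_iff, exists_mem_image, EReal.coe_lt_coe_iff, mem_ofPred_eq]
  exact exists_congr fun t => and_comm

theorem phiF_le_add_of_add_mem (hBC : ∀ b ∈ B, ∀ c ∈ C, b + c ∈ B) {y₁ y₂ : Y} {c : ℝ}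
    (h : phiF C k (y₁ - y₂) ≤ c) : phiF B k y₁ ≤ phiF B k y₂ + c := by
  refine EReal.le_of_forall_lt_iff_le.mp fun z hz => ?_
  have hlt : phiF B k y₂ < ((z - c : ℝ) : EReal) := by
    rw [EReal.coe_sub]
    exact (EReal.lt_sub_iff_add_lt (.inl (EReal.coe_ne_bot c)) (.inl (EReal.coe_ne_top c))).mpr
      hz
  obtain ⟨t₂, ht₂, hy₂⟩ := phiF_lt_coe_iff.mp hlt
  obtain ⟨s, hs, hu⟩ := phiF_lt_coe_iff.mp (h.trans_lt (EReal.coe_lt_coe_iff.mpr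
    (by linarith : c < z - t₂)))
  refine (phiF_le_of_sub_smul_mem (t := t₂ + s) ?_).trans (EReal.coe_le_coe_iff.mpr (by linarith))
  convert hBC _ hy₂ _ hu using 1
  module

theorem zero_mem_recCone (A : Set Y) : (0 : Y) ∈ recCone A := fun a ha t _ => by simpa using ha

theorem add_mem_recCone {u v : Y} (hu : u ∈ recCone A) (hv : v ∈ recCone A) :
    u + v ∈ recCone A := fun a ha t ht => by
  simpa only [smul_add, add_assoc] using hv _ (hu a ha t ht) t ht

theorem smul_mem_recCone {u : Y} {s : ℝ} (hs : 0 ≤ s) (hu : u ∈ recCone A) :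
    s • u ∈ recCone A := fun a ha t ht => by
  simpa only [mul_smul] using hu a ha (t * s) (mul_nonneg ht hs)

theorem add_mem_of_mem_recCone {a u : Y} (ha : a ∈ A) (hu : u ∈ recCone A) : a + u ∈ A := by
  simpa using hu a ha 1 zero_le_one

theorem recCone_recCone (A : Set Y) : recCone (recCone A) = recCone A := by
  refine Subset.antisymm (fun u hu => ?_) fun u hu c hc t ht =>
    add_mem_recCone hc (smul_mem_recCone ht hu)
  simpa using hu 0 (zero_mem_recCone A) 1 zero_le_one

theorem neg_mem_recCone_iff : -k ∈ recCone A ↔ ∀ a ∈ A, ∀ t : ℝ, 0 ≤ t → a - t • k ∈ A := by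
  simp only [recCone, mem_ofPred_eq, smul_neg, ← sub_eq_add_neg]

theorem mem_of_phiF_lt_zero (hk : -k ∈ recCone A) (h : phiF A k y < (0 : ℝ)) : y ∈ A := by
  obtain ⟨t, ht, hy⟩ := phiF_lt_coe_iff.mp h
  simpa using hk _ hy (-t) (by linarith)

theorem eq_univ_of_recCone_eq_univ (hA : A.Nonempty) (h : recCone A = univ) : A = univ := by
  obtain ⟨a, ha⟩ := hA
  refine eq_univ_of_forall fun z => ?_
  have hz : z - a ∈ recCone A := h ▸ mem_univ _
  simpa using add_mem_of_mem_recCone ha hz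

end VectorSpace

section Normed

variable {Y : Type*} [NormedAddCommGroup Y] [NormedSpace ℝ Y] {A B : Set Y} {k : Y} {r L : ℝ}

theorem sub_smul_mem_recCone_of_ball (hr : 0 < r) (hball : ball (-k) r ⊆ recCone A) {u : Y}
    {t : ℝ} (ht : r⁻¹ * ‖u‖ < t) : u - t • k ∈ recCone A := by
  have ht₀ : 0 < t := lt_of_le_of_lt (by positivity) ht
  have hmem : t⁻¹ • u - k ∈ ball (-k) r := by
    rw [mem_ball, dist_eq_norm, sub_neg_eq_add, sub_add_cancel, norm_smul,
      Real.norm_of_nonneg (inv_nonneg.2 ht₀.le), inv_mul_lt_iff₀ ht₀, mul_comm]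
    exact (inv_mul_lt_iff₀ hr).mp ht
  simpa [smul_sub, smul_smul, ht₀.ne'] using smul_mem_recCone ht₀.le (hball hmem)

theorem phiF_recCone_le_of_ball (hr : 0 < r) (hball : ball (-k) r ⊆ recCone A) (u : Y) :
    phiF (recCone A) k u ≤ ((r⁻¹ * ‖u‖ : ℝ) : EReal) :=
  EReal.le_of_forall_lt_iff_le.mp fun _ ht =>
    phiF_le_of_sub_smul_mem (sub_smul_mem_recCone_of_ball hr hball (EReal.coe_lt_coe_iff.mp ht))

theorem phiF_ne_top_of_ball (hr : 0 < r) (hball : ball (-k) r ⊆ recCone A)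
    (hBA : ∀ b ∈ B, ∀ u ∈ recCone A, b + u ∈ B) (hB : B.Nonempty) (y : Y) :
    phiF B k y ≠ ⊤ := by
  obtain ⟨b, hb⟩ := hB
  have hu := sub_smul_mem_recCone_of_ball hr hball (u := y - b) (lt_add_one _)
  have hy : y - (r⁻¹ * ‖y - b‖ + 1) • k ∈ B := by
    convert hBA b hb _ hu using 1
    abel
  exact ne_top_of_le_ne_top (EReal.coe_ne_top _) (phiF_le_of_sub_smul_mem hy)

theorem eq_univ_of_phiF_eq_bot (hr : 0 < r) (hball : ball (-k) r ⊆ recCone A)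
    (hBA : ∀ b ∈ B, ∀ u ∈ recCone A, b + u ∈ B) {y : Y}
    (h : phiF B k y = ⊥) : B = univ := by
  refine eq_univ_of_forall fun z => ?_
  obtain ⟨s, hs, hy⟩ : ∃ s < -(r⁻¹ * ‖z - y‖), y - s • k ∈ B :=
    phiF_lt_coe_iff.mp (by rw [h]; exact EReal.bot_lt_coe _)
  have hu := sub_smul_mem_recCone_of_ball hr hball (t := -s) (lt_neg_of_lt_neg hs)
  convert hBA _ hy _ hu using 1
  module

theorem phiF_finite_and_lipschitz_of_ball (hr : 0 < r) (hball : ball (-k) r ⊆ recCone A)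
    (hBA : ∀ b ∈ B, ∀ u ∈ recCone A, b + u ∈ B) (hB : B.Nonempty) (hBu : B ≠ univ) :
    (∀ y : Y, phiF B k y ≠ ⊤ ∧ phiF B k y ≠ ⊥) ∧
      ∃ L : ℝ, 0 ≤ L ∧ ∀ y₁ y₂ : Y,
        phiF B k y₁ ≤ phiF B k y₂ + ((L * ‖y₁ - y₂‖ : ℝ) : EReal) :=
  ⟨fun y => ⟨phiF_ne_top_of_ball hr hball hBA hB y,
      fun h => hBu (eq_univ_of_phiF_eq_bot hr hball hBA h)⟩,
    r⁻¹, inv_nonneg.2 hr.le,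
    fun _ _ => phiF_le_add_of_add_mem hBA (phiF_recCone_le_of_ball hr hball _)⟩

theorem ball_subset_recCone_of_lipschitz (hk : -k ∈ recCone B) (hL : 0 ≤ L)
    (hLip : ∀ y₁ y₂ : Y, phiF B k y₁ ≤ phiF B k y₂ + ((L * ‖y₁ - y₂‖ : ℝ) : EReal)) :
    ball (-k) (L + 1)⁻¹ ⊆ recCone B := by
  intro w hw a ha t ht
  rcases ht.eq_or_lt with rfl | ht
  · simpa using ha
  have hwk : ‖w + k‖ * (L + 1) < 1 := by
    rwa [mem_ball, dist_eq_norm, sub_neg_eq_add, ← one_div, lt_div_iff₀ (by positivity)]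
      at hw
  have hdist : ‖(a + t • w) - (a - t • k)‖ = t * ‖w + k‖ := by
    rw [show (a + t • w) - (a - t • k) = t • (w + k) by module, norm_smul,
      Real.norm_of_nonneg ht.le]
  refine mem_of_phiF_lt_zero hk ?_
  calc phiF B k (a + t • w)
      ≤ phiF B k (a - t • k) + ((L * ‖(a + t • w) - (a - t • k)‖ : ℝ) : EReal) := hLip _ _
    _ ≤ ((-t + L * (t * ‖w + k‖) : ℝ) : EReal) := by
        rw [hdist, EReal.coe_add]
        gcongr
        exact phiF_le_of_sub_smul_mem (by simpa using ha)
    _ < ((0 : ℝ) : EReal) := EReal.coe_lt_coe_iff.mpr (by nlinarith [norm_nonneg (w + k)])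

theorem neg_mem_interior_recCone_of_lipschitz (hk : -k ∈ recCone B) (hL : 0 ≤ L)
    (hLip : ∀ y₁ y₂ : Y, phiF B k y₁ ≤ phiF B k y₂ + ((L * ‖y₁ - y₂‖ : ℝ) : EReal)) :
    -k ∈ interior (recCone B) :=
  mem_interior.mpr ⟨_, ball_subset_recCone_of_lipschitz hk hL hLip, isOpen_ball,
    mem_ball_self (by positivity)⟩

theorem phiF_le_mul_norm_of_lipschitz (h0 : (0 : Y) ∈ B)
    (hLip : ∀ y₁ y₂ : Y, phiF B k y₁ ≤ phiF B k y₂ + ((L * ‖y₁ - y₂‖ : ℝ) : EReal)) (u : Y) :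
    phiF B k u ≤ ((L * ‖u‖ : ℝ) : EReal) :=
  calc phiF B k u ≤ phiF B k 0 + ((L * ‖u - 0‖ : ℝ) : EReal) := hLip u 0
    _ ≤ ((0 : ℝ) : EReal) + ((L * ‖u‖ : ℝ) : EReal) := by
        rw [sub_zero]
        gcongr
        exact phiF_le_of_sub_smul_mem (by simpa using h0)
    _ = ((L * ‖u‖ : ℝ) : EReal) := zero_add _

end Normed

theorem stmt_18_general {Y : Type*} [NormedAddCommGroup Y] [NormedSpace ℝ Y]
    (A : Set Y) (hAne : A.Nonempty) (hAp : A ≠ Set.univ)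
    (k : Y) (hrec : ∀ a ∈ A, ∀ t : ℝ, 0 ≤ t → a - t • k ∈ A) :
    (((∀ y : Y, phiF A k y ≠ ⊤ ∧ phiF A k y ≠ ⊥) ∧
        ∃ L : ℝ, 0 ≤ L ∧ ∀ y₁ y₂ : Y,
          phiF A k y₁ ≤ phiF A k y₂ + ((L * ‖y₁ - y₂‖ : ℝ) : EReal)) ↔
      -k ∈ interior (recCone A)) ∧
    (((∀ y : Y, phiF (recCone A) k y ≠ ⊤ ∧ phiF (recCone A) k y ≠ ⊥) ∧
        ∃ L : ℝ, 0 ≤ L ∧ ∀ y₁ y₂ : Y,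
          phiF (recCone A) k y₁ ≤ phiF (recCone A) k y₂ + ((L * ‖y₁ - y₂‖ : ℝ) : EReal)) ↔
      -k ∈ interior (recCone A)) ∧
    (-k ∈ interior (recCone A) →
      ∀ L : ℝ, 0 ≤ L →
        (∀ y₁ y₂ : Y, phiF (recCone A) k y₁ ≤
            phiF (recCone A) k y₂ + ((L * ‖y₁ - y₂‖ : ℝ) : EReal)) →
        ∀ y₁ y₂ : Y, phiF A k y₁ ≤ phiF A k y₂ + ((L * ‖y₁ - y₂‖ : ℝ) : EReal)) := by
  have hkA : -k ∈ recCone A := neg_mem_recCone_iff.mpr hrec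
  have hkC : -k ∈ recCone (recCone A) := by rwa [recCone_recCone]
  have hAC : ∀ a ∈ A, ∀ u ∈ recCone A, a + u ∈ A :=
    fun _ ha _ hu => add_mem_of_mem_recCone ha hu
  have hCC : ∀ c ∈ recCone A, ∀ u ∈ recCone A, c + u ∈ recCone A :=
    fun _ hc _ hu => add_mem_recCone hc hu
  have exists_ball : -k ∈ interior (recCone A) → ∃ r > 0, ball (-k) r ⊆ recCone A :=
    fun h => Metric.mem_nhds_iff.mp (mem_interior_iff_mem_nhds.mp h)
  refine ⟨⟨fun ⟨_, L, hL, hLip⟩ => neg_mem_interior_recCone_of_lipschitz hkA hL hLip,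
      fun hint => ?_⟩, ⟨fun ⟨_, L, hL, hLip⟩ => ?_, fun hint => ?_⟩,
    fun _ L _ hLip _ _ =>
      phiF_le_add_of_add_mem hAC (phiF_le_mul_norm_of_lipschitz (zero_mem_recCone A) hLip _)⟩
  · obtain ⟨r, hr, hball⟩ := exists_ball hint
    exact phiF_finite_and_lipschitz_of_ball hr hball hAC hAne hAp
  · simpa only [recCone_recCone] using neg_mem_interior_recCone_of_lipschitz hkC hL hLip
  · obtain ⟨r, hr, hball⟩ := exists_ball hint
    exact phiF_finite_and_lipschitz_of_ball hr hball hCC ⟨0, zero_mem_recCone A⟩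
      fun h => hAp (eq_univ_of_recCone_eq_univ hAne h)

theorem stmt_18 {Y : Type*} [NormedAddCommGroup Y] [NormedSpace ℝ Y] [CompleteSpace Y]
    (A : Set Y) (hAc : IsClosed A) (hAne : A.Nonempty) (hAp : A ≠ Set.univ)
    (k : Y) (hk : k ≠ 0) (hrec : ∀ a ∈ A, ∀ t : ℝ, 0 ≤ t → a - t • k ∈ A) :
    (((∀ y : Y, phiF A k y ≠ ⊤ ∧ phiF A k y ≠ ⊥) ∧
        ∃ L : ℝ, 0 ≤ L ∧ ∀ y₁ y₂ : Y,
          phiF A k y₁ ≤ phiF A k y₂ + ((L * ‖y₁ - y₂‖ : ℝ) : EReal)) ↔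
      -k ∈ interior (recCone A)) ∧
    (((∀ y : Y, phiF (recCone A) k y ≠ ⊤ ∧ phiF (recCone A) k y ≠ ⊥) ∧
        ∃ L : ℝ, 0 ≤ L ∧ ∀ y₁ y₂ : Y,
          phiF (recCone A) k y₁ ≤ phiF (recCone A) k y₂ + ((L * ‖y₁ - y₂‖ : ℝ) : EReal)) ↔
      -k ∈ interior (recCone A)) ∧
    (-k ∈ interior (recCone A) →
      ∀ L : ℝ, 0 ≤ L →
        (∀ y₁ y₂ : Y, phiF (recCone A) k y₁ ≤
            phiF (recCone A) k y₂ + ((L * ‖y₁ - y₂‖ : ℝ) : EReal)) →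
        ∀ y₁ y₂ : Y, phiF A k y₁ ≤ phiF A k y₂ + ((L * ‖y₁ - y₂‖ : ℝ) : EReal)) :=
  stmt_18_general A hAne hAp k hrec
end
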